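/- For t ≥ 1 and H ranging over a closed cone C in ℝⁿ on which the linear functionals α_j are nonnegative, provided the cone C contains a ray on which all ⟨α_j, ·⟩ are strictly positive, one has sup_{H∈C} t^{-n/2}∏_{j}(1+t+⟨α_j,H⟩)^{b_j} e^{-|H|²/(4t)} ≍ t^{-n/2+Σ_j b_j} as t → ∞. -/

import Mathlib

set_option maxHeartbeats 1000000 in
theorem stmt11 (n m : ℕ)
    (α : Fin m → (EuclideanSpace ℝ (Fin n) →ₗ[ℝ] ℝ)) (b : Fin m → ℝ)
    (C : Set (EuclideanSpace ℝ (Fin n))) (hCclosed : IsClosed C)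
    (hcone : ∀ H ∈ C, ∀ r : ℝ, 0 ≤ r → r • H ∈ C)
    (hnonneg : ∀ j, ∀ H ∈ C, 0 ≤ α j H)
    (ρ : EuclideanSpace ℝ (Fin n)) (hρC : ρ ∈ C) (hρ : ‖ρ‖ = 1)
    (hρpos : ∀ j, 0 < α j ρ) :
    ∃ c C' T : ℝ, 0 < c ∧ c ≤ C' ∧ ∀ t ≥ T,
      (∀ H ∈ C, t ^ (-(n : ℝ) / 2) * (∏ j, (1 + t + α j H) ^ (b j)) *
          Real.exp (-‖H‖ ^ 2 / (4 * t))
        ≤ C' * t ^ (-(n : ℝ) / 2 + ∑ j, b j)) ∧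
      (∃ H ∈ C, c * t ^ (-(n : ℝ) / 2 + ∑ j, b j)
        ≤ t ^ (-(n : ℝ) / 2) * (∏ j, (1 + t + α j H) ^ (b j)) *
          Real.exp (-‖H‖ ^ 2 / (4 * t))) := by
  classical
  set A : Fin m → ℝ := fun j => ‖LinearMap.toContinuousLinearMap (α j)‖ with hA
  have hA0 : ∀ j, 0 ≤ A j := fun j => norm_nonneg _
  have hAle : ∀ j, ∀ H : EuclideanSpace ℝ (Fin n), α j H ≤ A j * ‖H‖ := by
    intro j H
    have h1 : (LinearMap.toContinuousLinearMap (α j)) H = α j H := by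
      rw [LinearMap.coe_toContinuousLinearMap']
    calc α j H = (LinearMap.toContinuousLinearMap (α j)) H := h1.symm
      _ ≤ |(LinearMap.toContinuousLinearMap (α j)) H| := le_abs_self _
      _ = ‖(LinearMap.toContinuousLinearMap (α j)) H‖ := rfl
      _ ≤ A j * ‖H‖ := (LinearMap.toContinuousLinearMap (α j)).le_opNorm H
  set M : ℝ := 1 + ∑ j, A j with hM
  have hMj : ∀ j, A j ≤ M := by
    intro j
    have h1 : A j ≤ ∑ j, A j :=
      Finset.single_le_sum (f := A) (fun i _ => hA0 i) (Finset.mem_univ j)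
    linarith
  have hM1 : (1:ℝ) ≤ M := by
    have : (0:ℝ) ≤ ∑ j, A j := Finset.sum_nonneg fun i _ => hA0 i
    linarith
  set K : ℝ := 2 + M with hK
  have hK1 : (1:ℝ) ≤ K := by linarith
  set B : ℝ := ∑ j, max (b j) 0 with hB
  have hB0 : 0 ≤ B := Finset.sum_nonneg fun i _ => le_max_right _ _
  set c : ℝ := Real.exp (-(1/4)) * ∏ j, min 1 ((2 + α j ρ) ^ (b j)) with hc
  set C' : ℝ := K ^ B * Real.exp (B ^ 2) with hC'
  have hmpos : ∀ j, 0 < min 1 ((2 + α j ρ) ^ (b j)) := by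
    intro j
    have : (0:ℝ) < 2 + α j ρ := by have := hρpos j; linarith
    exact lt_min one_pos (Real.rpow_pos_of_pos this _)
  have hcpos : 0 < c := by
    exact mul_pos (Real.exp_pos _) (Finset.prod_pos fun j _ => hmpos j)
  have hc1 : c ≤ 1 := by
    have h1 : (∏ j, min 1 ((2 + α j ρ) ^ (b j))) ≤ 1 := by
      calc (∏ j, min 1 ((2 + α j ρ) ^ (b j))) ≤ ∏ j : Fin m, 1 :=
            Finset.prod_le_prod (fun j _ => (hmpos j).le) (fun j _ => min_le_left _ _)
        _ = 1 := by simp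
    have h2 : Real.exp (-(1/4)) ≤ 1 := by
      rw [Real.exp_le_one_iff]; norm_num
    calc c ≤ 1 * 1 := mul_le_mul h2 h1 (Finset.prod_pos fun j _ => hmpos j).le one_pos.le
      _ = 1 := by ring
  have hC'1 : (1:ℝ) ≤ C' := by
    have h1 : (1:ℝ) ≤ K ^ B := Real.one_le_rpow hK1 hB0
    have h2 : (1:ℝ) ≤ Real.exp (B ^ 2) := by
      rw [Real.one_le_exp_iff]; positivity
    calc (1:ℝ) = 1 * 1 := by ring
      _ ≤ C' := mul_le_mul h1 h2 one_pos.le (by linarith)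
  refine ⟨c, C', 1, hcpos, le_trans hc1 hC'1, fun t ht => ?_⟩
  have ht0 : (0:ℝ) < t := lt_of_lt_of_le one_pos ht
  have hst : Real.sqrt t * Real.sqrt t = t := Real.mul_self_sqrt ht0.le
  have hst1 : (1:ℝ) ≤ Real.sqrt t := by
    rw [show (1:ℝ) = Real.sqrt 1 by simp]; exact Real.sqrt_le_sqrt ht
  have hstt : Real.sqrt t ≤ t := by nlinarith
  have hrpow_split : t ^ (-(n : ℝ) / 2 + ∑ j, b j)
      = t ^ (-(n : ℝ) / 2) * t ^ (∑ j, b j) := Real.rpow_add ht0 _ _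
  constructor
  · -- upper bound
    intro H hH
    set s : ℝ := ‖H‖ / Real.sqrt t with hs
    have hs0 : 0 ≤ s := by positivity
    have hHs : ‖H‖ = Real.sqrt t * s := by
      have hsq0 : Real.sqrt t ≠ 0 := by positivity
      rw [hs]; field_simp
    have hprod : (∏ j, (1 + t + α j H) ^ (b j))
        ≤ t ^ (∑ j, b j) * (K ^ B * Real.exp (s * B)) := by
      have key : ∀ j, (1 + t + α j H) ^ (b j)
          ≤ t ^ (b j) * (K * Real.exp s) ^ (max (b j) 0) := by
        intro j
        have hx0 : 0 ≤ α j H := hnonneg j H hH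
        have hxle : α j H ≤ A j * ‖H‖ := hAle j H
        have hbase : (0:ℝ) < 1 + t + α j H := by linarith
        rcases le_or_gt 0 (b j) with hb | hb
        · rw [max_eq_left hb]
          have h1 : 1 + t + α j H ≤ t * (K * Real.exp s) := by
            have h3 : α j H ≤ M * (Real.sqrt t * s) := by
              rw [← hHs]
              calc α j H ≤ A j * ‖H‖ := hxle
                _ ≤ M * ‖H‖ := mul_le_mul_of_nonneg_right (hMj j) (norm_nonneg _)
            have h5 : Real.sqrt t * s ≤ t * s := mul_le_mul_of_nonneg_right hstt hs0
            have h6 : 1 + t + α j H ≤ t * (K * (1 + s)) := by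
              rw [hK]
              nlinarith [mul_le_mul_of_nonneg_left h5 (by linarith : (0:ℝ) ≤ M),
                mul_nonneg ht0.le hs0]
            have h7 : 1 + s ≤ Real.exp s := by
              have := Real.add_one_le_exp s; linarith
            have h8 : t * (K * (1 + s)) ≤ t * (K * Real.exp s) := by
              apply mul_le_mul_of_nonneg_left _ ht0.le
              exact mul_le_mul_of_nonneg_left h7 (by linarith)
            linarith
          calc (1 + t + α j H) ^ (b j) ≤ (t * (K * Real.exp s)) ^ (b j) :=
                Real.rpow_le_rpow hbase.le h1 hb
            _ = t ^ (b j) * (K * Real.exp s) ^ (b j) :=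
                Real.mul_rpow ht0.le (by positivity)
        · rw [max_eq_right hb.le, Real.rpow_zero, mul_one]
          exact Real.rpow_le_rpow_of_nonpos ht0 (by linarith) hb.le
      calc (∏ j, (1 + t + α j H) ^ (b j))
          ≤ ∏ j, t ^ (b j) * (K * Real.exp s) ^ (max (b j) 0) :=
            Finset.prod_le_prod (fun j _ => (Real.rpow_pos_of_pos (by
              have := hnonneg j H hH; linarith) _).le) (fun j _ => key j)
        _ = (∏ j, t ^ (b j)) * ∏ j, (K * Real.exp s) ^ (max (b j) 0) :=
            Finset.prod_mul_distrib
        _ = t ^ (∑ j, b j) * (K * Real.exp s) ^ B := by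
            rw [← Real.rpow_sum_of_pos ht0, ← Real.rpow_sum_of_pos (by positivity)]
        _ = t ^ (∑ j, b j) * (K ^ B * (Real.exp s) ^ B) := by
            rw [Real.mul_rpow (by linarith) (Real.exp_pos _).le]
        _ = t ^ (∑ j, b j) * (K ^ B * Real.exp (s * B)) := by
            rw [← Real.exp_mul]
      -- done
    have hEB : Real.exp (s * B) * Real.exp (-‖H‖ ^ 2 / (4 * t)) ≤ Real.exp (B ^ 2) := by
      rw [← Real.exp_add, Real.exp_le_exp]
      have hH2 : ‖H‖ ^ 2 = t * s ^ 2 := by rw [hHs]; nlinarith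
      rw [hH2]
      have : t * s ^ 2 / (4 * t) = s ^ 2 / 4 := by field_simp
      rw [neg_div, this]
      nlinarith [sq_nonneg (s / 2 - B)]
    have hp0 : (0:ℝ) ≤ ∏ j, (1 + t + α j H) ^ (b j) :=
      Finset.prod_nonneg fun j _ => (Real.rpow_pos_of_pos (by
        have := hnonneg j H hH; linarith) _).le
    calc t ^ (-(n : ℝ) / 2) * (∏ j, (1 + t + α j H) ^ (b j)) * Real.exp (-‖H‖ ^ 2 / (4 * t))
        ≤ t ^ (-(n : ℝ) / 2) * (t ^ (∑ j, b j) * (K ^ B * Real.exp (s * B))) *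
            Real.exp (-‖H‖ ^ 2 / (4 * t)) := by
          have h0 : (0:ℝ) ≤ t ^ (-(n : ℝ) / 2) := (Real.rpow_pos_of_pos ht0 _).le
          exact mul_le_mul_of_nonneg_right (mul_le_mul_of_nonneg_left hprod h0)
            (Real.exp_pos _).le
      _ = t ^ (-(n : ℝ) / 2) * t ^ (∑ j, b j) * K ^ B *
            (Real.exp (s * B) * Real.exp (-‖H‖ ^ 2 / (4 * t))) := by ring
      _ ≤ t ^ (-(n : ℝ) / 2) * t ^ (∑ j, b j) * K ^ B * Real.exp (B ^ 2) := by
          apply mul_le_mul_of_nonneg_left hEB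
          positivity
      _ = C' * t ^ (-(n : ℝ) / 2 + ∑ j, b j) := by
          rw [hrpow_split, hC']; ring
  · -- lower bound
    refine ⟨Real.sqrt t • ρ, hcone ρ hρC _ (Real.sqrt_nonneg t), ?_⟩
    have hnorm : ‖Real.sqrt t • ρ‖ = Real.sqrt t := by
      rw [norm_smul, hρ, mul_one, Real.norm_eq_abs, abs_of_nonneg (Real.sqrt_nonneg t)]
    have hαsm : ∀ j, α j (Real.sqrt t • ρ) = Real.sqrt t * α j ρ := by
      intro j; rw [map_smul]; rfl
    have hexpval : Real.exp (-‖Real.sqrt t • ρ‖ ^ 2 / (4 * t)) = Real.exp (-(1/4)) := by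
      rw [hnorm]
      congr 1
      rw [sq, hst]
      field_simp
    have hprod : t ^ (∑ j, b j) * (∏ j, min 1 ((2 + α j ρ) ^ (b j)))
        ≤ ∏ j, (1 + t + α j (Real.sqrt t • ρ)) ^ (b j) := by
      have key : ∀ j, t ^ (b j) * min 1 ((2 + α j ρ) ^ (b j))
          ≤ (1 + t + α j (Real.sqrt t • ρ)) ^ (b j) := by
        intro j
        rw [hαsm j]
        have hp : 0 < α j ρ := hρpos j
        have hbase : (0:ℝ) < 1 + t + Real.sqrt t * α j ρ := by nlinarith
        rcases le_or_gt 0 (b j) with hb | hb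
        · calc t ^ (b j) * min 1 ((2 + α j ρ) ^ (b j))
              ≤ t ^ (b j) * 1 := mul_le_mul_of_nonneg_left (min_le_left _ _)
                (Real.rpow_pos_of_pos ht0 _).le
            _ = t ^ (b j) := mul_one _
            _ ≤ (1 + t + Real.sqrt t * α j ρ) ^ (b j) :=
                Real.rpow_le_rpow ht0.le (by nlinarith) hb
        · calc t ^ (b j) * min 1 ((2 + α j ρ) ^ (b j))
              ≤ t ^ (b j) * (2 + α j ρ) ^ (b j) := mul_le_mul_of_nonneg_left
                (min_le_right _ _) (Real.rpow_pos_of_pos ht0 _).le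
            _ = (t * (2 + α j ρ)) ^ (b j) :=
                (Real.mul_rpow ht0.le (by linarith)).symm
            _ ≤ (1 + t + Real.sqrt t * α j ρ) ^ (b j) := by
                apply Real.rpow_le_rpow_of_nonpos hbase _ hb.le
                nlinarith
      calc t ^ (∑ j, b j) * (∏ j, min 1 ((2 + α j ρ) ^ (b j)))
          = ∏ j, t ^ (b j) * min 1 ((2 + α j ρ) ^ (b j)) := by
            rw [Finset.prod_mul_distrib, ← Real.rpow_sum_of_pos ht0]
        _ ≤ ∏ j, (1 + t + α j (Real.sqrt t • ρ)) ^ (b j) :=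
            Finset.prod_le_prod
              (fun j _ => (mul_pos (Real.rpow_pos_of_pos ht0 _) (hmpos j)).le)
              (fun j _ => key j)
    calc c * t ^ (-(n : ℝ) / 2 + ∑ j, b j)
        = t ^ (-(n : ℝ) / 2) * (t ^ (∑ j, b j) * ∏ j, min 1 ((2 + α j ρ) ^ (b j))) *
            Real.exp (-(1/4)) := by rw [hrpow_split, hc]; ring
      _ ≤ t ^ (-(n : ℝ) / 2) * (∏ j, (1 + t + α j (Real.sqrt t • ρ)) ^ (b j)) *
            Real.exp (-(1/4)) := by
          apply mul_le_mul_of_nonneg_right _ (Real.exp_pos _).le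
          exact mul_le_mul_of_nonneg_left hprod (Real.rpow_pos_of_pos ht0 _).le
      _ = t ^ (-(n : ℝ) / 2) * (∏ j, (1 + t + α j (Real.sqrt t • ρ)) ^ (b j)) *
            Real.exp (-‖Real.sqrt t • ρ‖ ^ 2 / (4 * t)) := by rw [hexpval]
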